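/- arXiv:0808.0467 — 3 statements merged into one kernel-verified Lean document; each statement's English description precedes it below -/
import Mathlib

section
/- For a complex number s with Re(s) < 1, ∫₀¹ ζ(s,α) dα = 0, where the integral of the Hurwitz zeta function is taken over its second variable. -/
/-!
For `0 ≤ a ≤ 1` and `N ≥ 1`, splitting the Dirichlet series by residues modulo `N` gives the
multiplication formula `∑_{j<N} ζ(s, (a + j)/N) = N^s ζ(s, a)` for `Re s > 1`, and by analytic
continuation for all `s ≠ 1`. Integrating it over `a ∈ [0, 1]`, the left side becomes
`N ∫₀¹ ζ(s, α) dα`, so `(N - N^s) ∫₀¹ ζ(s, α) dα = 0`; for `Re s < 1` and `N = 2` we have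
`|2^s| < 2`, hence the integral vanishes.
-/

open HurwitzZeta Complex Real Set MeasureTheory

lemma IntervalIntegrable.comp_add_div {E : Type*} [NormedAddCommGroup E] {f : ℝ → E}
    {a b c : ℝ} (hc : c ≠ 0) (d : ℝ)
    (hf : IntervalIntegrable f volume ((a + d) / c) ((b + d) / c)) :
    IntervalIntegrable (fun x ↦ f ((x + d) / c)) volume a b := by
  have := (hf.comp_mul_left (c := c⁻¹)).comp_add_right d
  field_simp at this
  simpa [div_eq_inv_mul] using this

lemma intervalIntegral.integral_sum_comp_add_div {E : Type*} [NormedAddCommGroup E]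
    [NormedSpace ℝ E] {f : ℝ → E} (hf : IntervalIntegrable f volume 0 1) (N : ℕ) :
    ∫ x in (0 : ℝ)..1, ∑ j ∈ Finset.range N, f ((x + j) / N)
      = (N : ℝ) • ∫ x in (0 : ℝ)..1, f x := by
  rcases N.eq_zero_or_pos with rfl | hN
  · simp
  have hN' : (N : ℝ) ≠ 0 := by positivity
  have hmem (k : ℕ) (hk : k ≤ N) : (k / N : ℝ) ∈ uIcc 0 1 := by
    rw [uIcc_of_le zero_le_one]
    exact ⟨by positivity, (div_le_one (by positivity)).mpr (by exact_mod_cast hk)⟩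
  have hpiece (j : ℕ) (hj : j < N) : IntervalIntegrable f volume (j / N) ((j + 1 : ℕ) / N) :=
    hf.mono_set <| uIcc_subset_uIcc (hmem j hj.le) (hmem (j + 1) hj)
  have hcomp (j : ℕ) : ∫ x in (0 : ℝ)..1, f ((x + j) / N)
      = (N : ℝ) • ∫ x in (j / N : ℝ)..((j + 1 : ℕ) / N), f x := by
    rw [show (fun x : ℝ ↦ f ((x + j) / N)) = fun x ↦ f (x / N + j / N) by ext; ring_nf,
      intervalIntegral.integral_comp_div_add f hN']
    push_cast
    ring_nf
  rw [intervalIntegral.integral_finsetSum fun j hj ↦ ?_]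
  · simp_rw [hcomp, ← Finset.smul_sum]
    rw [intervalIntegral.sum_integral_adjacent_intervals (a := fun k : ℕ ↦ (k / N : ℝ)) hpiece]
    simp [hN']
  · refine IntervalIntegrable.comp_add_div hN' _ ?_
    simpa [add_comm] using hpiece j (Finset.mem_range.mp hj)

lemma sum_hurwitzZeta_div_of_one_lt_re {N : ℕ} [NeZero N] {a : ℝ} (ha : a ∈ Icc 0 1)
    {s : ℂ} (hs : 1 < s.re) :
    ∑ j ∈ Finset.range N, hurwitzZeta (((a + j) / N : ℝ) : UnitAddCircle) s
      = (N : ℂ) ^ s * hurwitzZeta (a : UnitAddCircle) s := by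
  have hN : (0 : ℝ) < N := Nat.cast_pos.mpr (NeZero.pos N)
  have hmem (j : Fin N) : (a + j) / N ∈ Icc (0 : ℝ) 1 := by
    have : (j : ℝ) + 1 ≤ N := by exact_mod_cast j.2
    constructor
    · have := ha.1; positivity
    · rw [div_le_one hN]; linarith [ha.2]
  have hterm (k : ℕ) (j : Fin N) : (N : ℂ) ^ s * (1 / (((k * N + j : ℕ) : ℂ) + a) ^ s)
      = 1 / ((k : ℂ) + ((a + j) / N : ℝ)) ^ s := by
    have h0 : (0 : ℝ) ≤ k + (a + j) / N := by have := (hmem j).1; positivity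
    have hsplit : (((k * N + j : ℕ) : ℂ) + a) = ((N : ℝ) : ℂ) * ((k + (a + j) / N : ℝ) : ℂ) := by
      have : (N : ℂ) ≠ 0 := NeZero.ne _
      push_cast
      field_simp
      ring
    have : (N : ℂ) ^ s ≠ 0 := by simp [NeZero.ne]
    rw [hsplit, mul_cpow_ofReal_nonneg hN.le h0]
    push_cast
    field_simp
  have hsum := (hasSum_hurwitzZeta_of_one_lt_re ha hs).mul_left ((N : ℂ) ^ s)
  rw [← (Nat.divModEquiv N).symm.hasSum_iff, ← (Equiv.prodComm _ _).hasSum_iff] at hsum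
  have hfib := hsum.prod_fiberwise fun j ↦
    (hasSum_hurwitzZeta_of_one_lt_re (hmem j) hs).congr_fun fun k ↦ hterm k j
  rw [← Fin.sum_univ_eq_sum_range]
  exact (hasSum_fintype _).unique hfib

lemma sum_hurwitzZeta_div {N : ℕ} [NeZero N] {a : ℝ} (ha : a ∈ Icc 0 1) {s : ℂ} (hs : s ≠ 1) :
    ∑ j ∈ Finset.range N, hurwitzZeta (((a + j) / N : ℝ) : UnitAddCircle) s
      = (N : ℂ) ^ s * hurwitzZeta (a : UnitAddCircle) s := by
  have hU : IsOpen ({1}ᶜ : Set ℂ) := isOpen_compl_singleton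
  have hlhs : AnalyticOnNhd ℂ (fun z ↦ ∑ j ∈ Finset.range N,
      hurwitzZeta (((a + j) / N : ℝ) : UnitAddCircle) z) {1}ᶜ :=
    DifferentiableOn.analyticOnNhd (fun z hz ↦ (DifferentiableAt.fun_sum fun j _ ↦
      differentiableAt_hurwitzZeta _ hz).differentiableWithinAt) hU
  have hrhs : AnalyticOnNhd ℂ (fun z ↦ (N : ℂ) ^ z * hurwitzZeta (a : UnitAddCircle) z) {1}ᶜ :=
    DifferentiableOn.analyticOnNhd (fun z hz ↦ ((differentiableAt_id.const_cpow
      (Or.inl (NeZero.ne _))).mul (differentiableAt_hurwitzZeta _ hz)).differentiableWithinAt) hU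
  have heq : (fun z ↦ ∑ j ∈ Finset.range N, hurwitzZeta (((a + j) / N : ℝ) : UnitAddCircle) z)
      =ᶠ[nhds 2] fun z ↦ (N : ℂ) ^ z * hurwitzZeta (a : UnitAddCircle) z := by
    filter_upwards [(isOpen_lt continuous_const continuous_re).mem_nhds
      (by norm_num : (1 : ℝ) < (2 : ℂ).re)] with z hz
    exact sum_hurwitzZeta_div_of_one_lt_re ha hz
  exact hlhs.eqOn_of_preconnected_of_eventuallyEq hrhs
    (isConnected_compl_singleton_of_one_lt_rank (by simp) _).isPreconnected
    (by norm_num) heq hs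

lemma natCast_cpow_ne_self {N : ℕ} (hN : 1 < N) {s : ℂ} (hs : s.re < 1) : (N : ℂ) ^ s ≠ N := by
  have hN' : (1 : ℝ) < N := by exact_mod_cast hN
  intro h
  have := congrArg norm h
  rw [← ofReal_natCast, norm_cpow_eq_rpow_re_of_pos (by linarith), norm_real, norm_of_nonneg
    (by linarith)] at this
  exact (Real.rpow_lt_self_of_one_lt hN' hs).ne this

theorem integral_hurwitzZeta_eq_zero (s : ℂ) (hs : s.re < 1) :
    ∫ α in (0:ℝ)..1, hurwitzZeta (α : UnitAddCircle) s = 0 := by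
  set f : ℝ → ℂ := fun α ↦ hurwitzZeta (α : UnitAddCircle) s
  -- a non-integrable `f` has Bochner integral `0` by convention
  by_cases hf : IntervalIntegrable f volume 0 1
  swap
  · exact intervalIntegral.integral_undef hf
  have hs1 : s ≠ 1 := by rintro rfl; simp at hs
  have hdup : (2 : ℂ) * ∫ α in (0:ℝ)..1, f α = (2 : ℂ) ^ s * ∫ α in (0:ℝ)..1, f α := by
    have h := intervalIntegral.integral_sum_comp_add_div hf 2
    rw [intervalIntegral.integral_congr fun α hα ↦ sum_hurwitzZeta_div (N := 2)
      (uIcc_of_le (zero_le_one' ℝ) ▸ hα) hs1, intervalIntegral.integral_const_mul,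
      real_smul] at h
    exact_mod_cast h.symm
  exact (mul_eq_mul_right_iff.mp hdup).resolve_left (natCast_cpow_ne_self one_lt_two hs).symm
end

section
/- For s with Re(s) < 1 and any integer r ≥ 0, ∫₀¹ (∂^r/∂s^r ζ)(s,α) dα = 0. -/
open HurwitzZeta Complex Real

/-!
The Hurwitz zeta function satisfies the duplication formula
`ζ(s, α/2) + ζ(s, (α+1)/2) = 2^s ζ(s, α)`. Differentiating it `j` times in `s` (Leibniz rule)
shows that the operator `T f (α) = f(α/2) + f((α+1)/2)` sends `∂ʲζ(s, ·)` to `2^s ∂ʲζ(s, ·)` plus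
a combination of lower derivatives. As `∫₀¹ T f = 2 ∫₀¹ f`, induction on the order gives
`2 ∫₀¹ f = 2^s ∫₀¹ f` for every integrable combination `f` of the derivatives, and `2^s ≠ 2`
because `Re s < 1`. Only `f` itself has to be integrable: its lower-order part `T f - 2^s f`
inherits integrability from it.
-/

open MeasureTheory intervalIntegral Set Submodule

noncomputable def halfShiftSum (R M : Type*) [Semiring R] [AddCommMonoid M] [Module R M] :
    (ℝ → M) →ₗ[R] (ℝ → M) :=
  LinearMap.funLeft R M (· / 2) + LinearMap.funLeft R M (fun α => (α + 1) / 2)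

@[simp]
lemma halfShiftSum_apply {R M : Type*} [Semiring R] [AddCommMonoid M] [Module R M]
    (f : ℝ → M) (α : ℝ) : halfShiftSum R M f α = f (α / 2) + f ((α + 1) / 2) := rfl

section HalfShiftSum

variable {E : Type*} [NormedAddCommGroup E] {f : ℝ → E}

lemma IntervalIntegrable.comp_div_two (hf : IntervalIntegrable f volume 0 (1 / 2)) :
    IntervalIntegrable (fun α => f (α / 2)) volume 0 1 := by
  have h := hf.comp_mul_right (c := 1 / 2)
  norm_num at h
  convert h using 3; ring

lemma IntervalIntegrable.comp_add_one_div_two (hf : IntervalIntegrable f volume (1 / 2) 1) :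
    IntervalIntegrable (fun α => f ((α + 1) / 2)) volume 0 1 := by
  have h := (hf.comp_add_right (1 / 2)).comp_mul_right (c := 1 / 2)
  norm_num at h
  convert h using 3; ring

lemma IntervalIntegrable.halfShiftSum {R : Type*} [Semiring R] [Module R E]
    (hf : IntervalIntegrable f volume 0 1) :
    IntervalIntegrable (halfShiftSum R E f) volume 0 1 :=
  (hf.mono_set (uIcc_subset_uIcc (by simp) (by norm_num))).comp_div_two.add
    (hf.mono_set (uIcc_subset_uIcc (by norm_num) (by simp))).comp_add_one_div_two

lemma integral_halfShiftSum [NormedSpace ℝ E] {R : Type*} [Semiring R] [Module R E]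
    (hf : IntervalIntegrable f volume 0 1) :
    ∫ α in (0 : ℝ)..1, halfShiftSum R E f α = (2 : ℝ) • ∫ α in (0 : ℝ)..1, f α := by
  have h₀ : IntervalIntegrable f volume 0 (1 / 2) :=
    hf.mono_set (uIcc_subset_uIcc (by simp) (by norm_num))
  have h₁ : IntervalIntegrable f volume (1 / 2) 1 :=
    hf.mono_set (uIcc_subset_uIcc (by norm_num) (by simp))
  simp only [halfShiftSum_apply]
  rw [intervalIntegral.integral_add h₀.comp_div_two h₁.comp_add_one_div_two,
    ← integral_add_adjacent_intervals h₀ h₁]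
  simp only [add_div _ (1 : ℝ), integral_comp_div f (two_ne_zero' ℝ)]
  norm_num

theorem integral_eq_zero_of_mem_span_of_halfShiftSum_triangular [NormedSpace ℂ E]
    {g : ℕ → ℝ → E} {c : ℂ} (hc : c ≠ 2)
    (hg : ∀ j, halfShiftSum ℂ E (g j) - c • g j ∈ span ℂ (g '' Iio j)) (n : ℕ) {f : ℝ → E}
    (hf : f ∈ span ℂ (g '' Iio n)) (hfi : IntervalIntegrable f volume 0 1) :
    ∫ α in (0 : ℝ)..1, f α = 0 := by
  induction n generalizing f with
  | zero => simp_all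
  | succ n ih =>
    have hLf : halfShiftSum ℂ E f - c • f ∈ span ℂ (g '' Iio n) := by
      refine span_le (p := (span ℂ (g '' Iio n)).comap (halfShiftSum ℂ E - c • .id)).mpr
        ?_ hf
      rintro _ ⟨j, hj, rfl⟩
      exact span_mono (image_mono (Iio_subset_Iio (Nat.lt_succ_iff.mp hj))) (hg j)
    have hcf : IntervalIntegrable (fun α => c • f α) volume 0 1 := hfi.smul c
    have h := ih hLf (hfi.halfShiftSum.sub hcf)
    simp only [Pi.sub_apply, Pi.smul_apply] at h
    rw [intervalIntegral.integral_sub hfi.halfShiftSum hcf, integral_halfShiftSum hfi,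
      intervalIntegral.integral_smul, two_smul, ← two_smul ℂ, ← sub_smul] at h
    exact (smul_eq_zero.mp h).resolve_left (sub_ne_zero.mpr hc.symm)

end HalfShiftSum

lemma two_cpow_ne_two {s : ℂ} (hs : s.re ≠ 1) : (2 : ℂ) ^ s ≠ 2 := by
  intro h
  have := congrArg norm h
  rw [← Nat.cast_ofNat, norm_natCast_cpow_of_pos two_pos, Complex.norm_natCast] at this
  exact hs ((rpow_right_inj two_pos (by norm_num)).mp (by simpa using this))

lemma iteratedDeriv_const_cpow {c : ℂ} (hc : c ≠ 0) (n : ℕ) :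
    iteratedDeriv n (fun z : ℂ => c ^ z) = fun z => Complex.log c ^ n * c ^ z := by
  simp only [cpow_def_of_ne_zero hc, iteratedDeriv_cexp_const_mul]

lemma analyticOnNhd_hurwitzZeta (a : UnitAddCircle) :
    AnalyticOnNhd ℂ (hurwitzZeta a) {1}ᶜ :=
  DifferentiableOn.analyticOnNhd
    (fun _ hz => (differentiableAt_hurwitzZeta a hz).differentiableWithinAt)
    isOpen_compl_singleton

lemma hurwitzZeta_div_two_add_of_one_lt_re {a : ℝ} (ha : a ∈ Icc 0 1) {z : ℂ} (hz : 1 < z.re) :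
    hurwitzZeta ↑(a / 2) z + hurwitzZeta ↑((a + 1) / 2) z = 2 ^ z * hurwitzZeta a z := by
  have hscale {x : ℝ} (hx : 0 ≤ x) :
      1 / ((2 * x : ℝ) : ℂ) ^ z = (2 ^ z)⁻¹ * (1 / (x : ℂ) ^ z) := by
    rw [ofReal_mul, mul_cpow_ofReal_nonneg zero_le_two hx]
    push_cast
    rw [one_div, mul_inv, one_div]
  have heven : HasSum (fun k : ℕ => 1 / (((2 * k : ℕ) : ℂ) + a) ^ z)
      ((2 ^ z)⁻¹ * hurwitzZeta ↑(a / 2) z) := by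
    refine ((hasSum_hurwitzZeta_of_one_lt_re ⟨by linarith [ha.1], by linarith [ha.2]⟩ hz).mul_left
      (2 ^ z)⁻¹).congr_fun fun k => ?_
    have e : ((2 * k : ℕ) : ℂ) + a = ((2 * (k + a / 2) : ℝ) : ℂ) := by push_cast; ring
    rw [e, hscale (by linarith [ha.1, k.cast_nonneg (α := ℝ)])]
    push_cast; rfl
  have hodd : HasSum (fun k : ℕ => 1 / (((2 * k + 1 : ℕ) : ℂ) + a) ^ z)
      ((2 ^ z)⁻¹ * hurwitzZeta ↑((a + 1) / 2) z) := by
    refine ((hasSum_hurwitzZeta_of_one_lt_re ⟨by linarith [ha.1], by linarith [ha.2]⟩ hz).mul_left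
      (2 ^ z)⁻¹).congr_fun fun k => ?_
    have e : ((2 * k + 1 : ℕ) : ℂ) + a = ((2 * (k + (a + 1) / 2) : ℝ) : ℂ) := by push_cast; ring
    rw [e, hscale (by linarith [ha.1, k.cast_nonneg (α := ℝ)])]
    push_cast; rfl
  have := (HasSum.even_add_odd (f := fun n : ℕ => 1 / ((n : ℂ) + a) ^ z) heven hodd).unique
    (hasSum_hurwitzZeta_of_one_lt_re ha hz)
  rw [← this, ← mul_add, ← mul_assoc, mul_inv_cancel₀ (by simp), one_mul]

lemma hurwitzZeta_div_two_add_of_mem_Icc {a : ℝ} (ha : a ∈ Icc 0 1) {z : ℂ} (hz : z ≠ 1) :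
    hurwitzZeta ↑(a / 2) z + hurwitzZeta ↑((a + 1) / 2) z = 2 ^ z * hurwitzZeta a z := by
  have hF : AnalyticOnNhd ℂ (fun z => hurwitzZeta ↑(a / 2) z + hurwitzZeta ↑((a + 1) / 2) z)
      {1}ᶜ := fun z hz =>
    (analyticOnNhd_hurwitzZeta _ z hz).add (analyticOnNhd_hurwitzZeta _ z hz)
  have hG : AnalyticOnNhd ℂ (fun z => 2 ^ z * hurwitzZeta a z) {1}ᶜ := fun z hz =>
    (analyticAt_const.cpow analyticAt_id (by simp)).mul (analyticOnNhd_hurwitzZeta _ z hz)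
  refine hF.eqOn_of_preconnected_of_eventuallyEq hG
    (isConnected_compl_singleton_of_one_lt_rank (by simp) 1).isPreconnected
    (z₀ := 2) (by norm_num) ?_ hz
  filter_upwards [(isOpen_lt continuous_const continuous_re).mem_nhds
    (by norm_num : (2 : ℂ) ∈ {z : ℂ | 1 < z.re})] with z hz
  exact hurwitzZeta_div_two_add_of_one_lt_re ha hz

lemma hurwitzZeta_div_two_add (a : ℝ) {z : ℂ} (hz : z ≠ 1) :
    hurwitzZeta ↑(a / 2) z + hurwitzZeta ↑((a + 1) / 2) z = 2 ^ z * hurwitzZeta a z := by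
  have hper : Function.Periodic (fun a : ℝ => hurwitzZeta ↑(a / 2) z
      + hurwitzZeta ↑((a + 1) / 2) z - 2 ^ z * hurwitzZeta a z) 1 := by
    intro a
    have h1 (x : ℝ) : ((x + 1 : ℝ) : UnitAddCircle) = x := AddCircle.coe_add_period 1 x
    simp only
    rw [show (a + 1 + 1) / 2 = a / 2 + 1 by ring, h1, h1]
    ring
  rw [← sub_eq_zero, ← hper.sub_int_mul_eq ⌊a⌋, mul_one, ← Int.fract, sub_eq_zero]
  exact hurwitzZeta_div_two_add_of_mem_Icc ⟨Int.fract_nonneg a, (Int.fract_lt_one a).le⟩ hz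

lemma iteratedDeriv_hurwitzZeta_div_two_add (a : ℝ) {s : ℂ} (hs : s ≠ 1) (j : ℕ) :
    iteratedDeriv j (hurwitzZeta ↑(a / 2)) s + iteratedDeriv j (hurwitzZeta ↑((a + 1) / 2)) s =
      ∑ i ∈ Finset.range (j + 1),
        j.choose i * (Complex.log 2 ^ i * 2 ^ s) * iteratedDeriv (j - i) (hurwitzZeta a) s := by
  have hcd (b : UnitAddCircle) : ContDiffAt ℂ j (hurwitzZeta b) s :=
    (analyticOnNhd_hurwitzZeta b s hs).contDiffAt
  rw [← iteratedDeriv_fun_add (hcd _) (hcd _),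
    (Set.EqOn.iteratedDeriv_of_isOpen (fun z hz => hurwitzZeta_div_two_add a hz)
      isOpen_compl_singleton j) hs,
    iteratedDeriv_fun_mul (f := fun z => (2 : ℂ) ^ z)
      (analyticAt_const.cpow analyticAt_id (by simp)).contDiffAt (hcd _)]
  simp only [iteratedDeriv_const_cpow two_ne_zero]

noncomputable def iteratedDerivHurwitzZeta (s : ℂ) (j : ℕ) (α : ℝ) : ℂ :=
  iteratedDeriv j (hurwitzZeta α) s

lemma halfShiftSum_iteratedDerivHurwitzZeta_sub_mem_span {s : ℂ} (hs : s ≠ 1) (j : ℕ) :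
    halfShiftSum ℂ ℂ (iteratedDerivHurwitzZeta s j) - (2 : ℂ) ^ s • iteratedDerivHurwitzZeta s j ∈
      span ℂ (iteratedDerivHurwitzZeta s '' Iio j) := by
  have h : halfShiftSum ℂ ℂ (iteratedDerivHurwitzZeta s j)
      - (2 : ℂ) ^ s • iteratedDerivHurwitzZeta s j = ∑ i ∈ Finset.range j,
        (j.choose (i + 1) * (Complex.log 2 ^ (i + 1) * 2 ^ s)) •
          iteratedDerivHurwitzZeta s (j - (i + 1)) := by
    funext α
    simp only [halfShiftSum_apply, Pi.sub_apply, Pi.smul_apply, Finset.sum_apply, smul_eq_mul,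
      iteratedDerivHurwitzZeta]
    rw [iteratedDeriv_hurwitzZeta_div_two_add α hs j, Finset.sum_range_succ']
    simp
  rw [h]
  exact sum_mem fun i hi => smul_mem _ _
    (subset_span ⟨j - (i + 1), by simp at hi ⊢; omega, rfl⟩)

theorem integral_iteratedDeriv_hurwitzZeta_eq_zero (s : ℂ) (hs : s.re < 1) (r : ℕ) :
    ∫ α in (0:ℝ)..1, iteratedDeriv r (fun z => hurwitzZeta (α : UnitAddCircle) z) s = 0 := by
  -- a non-integrable integrand has integral `0` by convention
  by_cases hint : IntervalIntegrable (iteratedDerivHurwitzZeta s r) volume 0 1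
  · have hs₁ : s ≠ 1 := by rintro rfl; simp at hs
    exact integral_eq_zero_of_mem_span_of_halfShiftSum_triangular (two_cpow_ne_two hs.ne)
      (halfShiftSum_iteratedDerivHurwitzZeta_sub_mem_span hs₁) (r + 1)
      (subset_span ⟨r, lt_add_one r, rfl⟩) hint
  · exact integral_undef hint
end

section
/- For a complex s with Re(s) > 1/2 and real α with 0 < α ≤ 1, Parseval's identity gives ∫₀¹ |φ(λ,α,s)|² dλ = ζ(2Re(s), α), where ζ(·,α) is the Hurwitz zeta function. -/
/-!
For `0 < λ < 1` the coefficients `e^{2πiλm}` have bounded partial sums, so summation by parts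
turns `∑ e^{2πiλm} (m + α)^{-s}` into a series that converges, locally uniformly, on `0 < re s`.
Its sum is holomorphic there and agrees with the Dirichlet series for `1 < re s`, hence it is
`φ(λ, α, s)`. For `1/2 < re s` the coefficients `(m + α)^{-s}` are square-summable, so the
partial sums of this Fourier series converge in `L²` to some `F`; a subsequence converges a.e.,
which identifies `φ(·, α, s)` with `F` a.e. on `(0, 1)`, and Parseval's identity for `F` gives
the result.
-/

open Complex Real Filter MeasureTheory Finset Topology AddCircle

section DirichletTest

variable {R : Type*} [NormedRing R]

theorem sum_range_mul_eq_sum_partialSum_mul_sub (a b : ℕ → R) (N : ℕ) :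
    ∑ m ∈ range N, a m * b m =
      ∑ m ∈ range N, (∑ k ∈ range (m + 1), a k) * (b m - b (m + 1)) +
        (∑ k ∈ range N, a k) * b N := by
  induction N with
  | zero => simp
  | succ n ih =>
    rw [sum_range_succ, ih, sum_range_succ _ n, sum_range_succ a n]
    noncomm_ring

theorem tendsto_sum_range_mul_of_bounded_of_summable_sub [CompleteSpace R] {a b : ℕ → R}
    {C : ℝ} (ha : ∀ n, ‖∑ k ∈ range n, a k‖ ≤ C) (hb : Summable fun m ↦ ‖b m - b (m + 1)‖)
    (hb0 : Tendsto b atTop (𝓝 0)) :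
    Tendsto (fun N ↦ ∑ m ∈ range N, a m * b m) atTop
      (𝓝 (∑' m, (∑ k ∈ range (m + 1), a k) * (b m - b (m + 1)))) := by
  have hsum : Summable fun m ↦ (∑ k ∈ range (m + 1), a k) * (b m - b (m + 1)) :=
    (hb.mul_left C).of_norm_bounded fun m ↦
      (norm_mul_le _ _).trans (mul_le_mul_of_nonneg_right (ha _) (norm_nonneg _))
  have hC : 0 ≤ C := (norm_nonneg _).trans (ha 0)
  have hboundary : Tendsto (fun N ↦ (∑ k ∈ range N, a k) * b N) atTop (𝓝 0) := by
    refine squeeze_zero_norm (fun N ↦ (norm_mul_le _ _).trans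
      (mul_le_mul_of_nonneg_right (ha N) (norm_nonneg _))) ?_
    simpa using (hb0.norm.const_mul C)
  simpa [← sum_range_mul_eq_sum_partialSum_mul_sub] using
    hsum.hasSum.tendsto_sum_nat.add hboundary

end DirichletTest

theorem norm_geom_sum_le_two_div {z : ℂ} (hz : ‖z‖ ≤ 1) (hz1 : z ≠ 1) (n : ℕ) :
    ‖∑ k ∈ range n, z ^ k‖ ≤ 2 / ‖z - 1‖ := by
  rw [geom_sum_eq hz1, norm_div]
  gcongr
  calc ‖z ^ n - 1‖ ≤ ‖z ^ n‖ + ‖(1 : ℂ)‖ := norm_sub_le _ _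
    _ ≤ 2 := by rw [norm_pow, norm_one]; linarith [pow_le_one₀ (norm_nonneg z) hz (n := n)]

theorem rpow_le_rpow_add_rpow {x a b y : ℝ} (hx : 0 < x) (ha : a ≤ y) (hb : y ≤ b) :
    x ^ y ≤ x ^ a + x ^ b := by
  rcases le_total 1 x with h1 | h1
  · linarith [Real.rpow_le_rpow_of_exponent_le h1 hb, Real.rpow_nonneg hx.le a]
  · linarith [Real.rpow_le_rpow_of_exponent_ge hx h1 ha, Real.rpow_nonneg hx.le b]

theorem summable_natCast_add_rpow_neg {α p : ℝ} (hα : 0 < α) (hp : 1 < p) :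
    Summable fun m : ℕ ↦ ((m : ℝ) + α) ^ (-p) := by
  refine ((Real.summable_one_div_nat_add_rpow α p).2 hp).congr fun m ↦ ?_
  have hpos : (0 : ℝ) < m + α := by positivity
  rw [abs_of_pos hpos, Real.rpow_neg hpos.le, one_div]

theorem norm_ofReal_cpow_neg_sub_le {x y : ℝ} {s : ℂ} (hx : 0 < x) (hxy : x ≤ y)
    (hs : 0 ≤ s.re) :
    ‖(x : ℂ) ^ (-s) - (y : ℂ) ^ (-s)‖ ≤ ‖s‖ * x ^ (-(s.re + 1)) * (y - x) := by
  have hpos : ∀ t ∈ Set.Icc x y, 0 < t := fun t ht ↦ hx.trans_le ht.1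
  have hderiv : ∀ t ∈ Set.Icc x y, HasDerivWithinAt (fun t : ℝ ↦ (t : ℂ) ^ (-s))
      (-s * (t : ℂ) ^ (-s - 1) * 1) (Set.Icc x y) t := fun t ht ↦
    (((hasDerivAt_id (t : ℂ)).cpow_const (ofReal_mem_slitPlane.2 (hpos t ht))).comp_ofReal
      (e := fun u ↦ u ^ (-s))).hasDerivWithinAt
  have hbound : ∀ t ∈ Set.Icc x y, ‖-s * (t : ℂ) ^ (-s - 1) * 1‖ ≤ ‖s‖ * x ^ (-(s.re + 1)) := by
    intro t ht
    have hre : (-s - 1).re = -(s.re + 1) := by simp; ring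
    rw [mul_one, norm_mul, norm_neg, norm_cpow_eq_rpow_re_of_pos (hpos t ht), hre]
    exact mul_le_mul_of_nonneg_left (Real.rpow_le_rpow_of_nonpos hx ht.1 (by linarith))
      (norm_nonneg s)
  have := (convex_Icc x y).norm_image_sub_le_of_norm_hasDerivWithin_le hderiv hbound
    (Set.left_mem_Icc.2 hxy) (Set.right_mem_Icc.2 hxy)
  rwa [norm_sub_rev, Real.norm_eq_abs, abs_of_nonneg (sub_nonneg.2 hxy)] at this

/-- The Lerch series `∑ z ^ m (m + α) ^ (-s)` after summation by parts. -/
noncomputable def lerchAbel (z : ℂ) (α : ℝ) (s : ℂ) : ℂ :=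
  ∑' m : ℕ, (∑ k ∈ range (m + 1), z ^ k) *
    (((m : ℂ) + α) ^ (-s) - (((m + 1 : ℕ) : ℂ) + α) ^ (-s))

section Lerch

variable {z : ℂ} {α : ℝ}

theorem natCast_add_ofReal_eq_ofReal (m : ℕ) (α : ℝ) : (m : ℂ) + α = ((m + α : ℝ) : ℂ) := by
  push_cast; rfl

theorem norm_natCast_add_cpow (hα : 0 < α) (m : ℕ) (s : ℂ) :
    ‖((m : ℂ) + α) ^ s‖ = ((m : ℝ) + α) ^ s.re := by
  rw [natCast_add_ofReal_eq_ofReal, norm_cpow_eq_rpow_re_of_pos (by positivity)]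

theorem norm_natCast_add_cpow_neg_sub_le (hα : 0 < α) {s : ℂ} (hs : 0 ≤ s.re) (m : ℕ) :
    ‖((m : ℂ) + α) ^ (-s) - (((m + 1 : ℕ) : ℂ) + α) ^ (-s)‖ ≤
      ‖s‖ * ((m : ℝ) + α) ^ (-(s.re + 1)) := by
  have h := norm_ofReal_cpow_neg_sub_le (by positivity : (0 : ℝ) < m + α)
    (by push_cast; linarith : (m : ℝ) + α ≤ (m + 1 : ℕ) + α) hs
  rw [natCast_add_ofReal_eq_ofReal, natCast_add_ofReal_eq_ofReal]
  simpa using h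

theorem tendsto_sum_range_pow_mul_lerchAbel (hz : ‖z‖ ≤ 1) (hz1 : z ≠ 1) (hα : 0 < α) {s : ℂ}
    (hs : 0 < s.re) :
    Tendsto (fun N ↦ ∑ m ∈ range N, z ^ m * ((m : ℂ) + α) ^ (-s)) atTop
      (𝓝 (lerchAbel z α s)) := by
  refine tendsto_sum_range_mul_of_bounded_of_summable_sub (norm_geom_sum_le_two_div hz hz1) ?_ ?_
  · exact ((summable_natCast_add_rpow_neg hα (by linarith : 1 < s.re + 1)).mul_left ‖s‖)
      |>.of_nonneg_of_le (fun _ ↦ norm_nonneg _) (norm_natCast_add_cpow_neg_sub_le hα hs.le)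
  · refine tendsto_zero_iff_norm_tendsto_zero.2 ?_
    simp_rw [norm_natCast_add_cpow hα, neg_re]
    exact (tendsto_rpow_neg_atTop hs).comp
      (tendsto_atTop_add_const_right atTop α tendsto_natCast_atTop_atTop)

theorem lerchAbel_eq_tsum (hz : ‖z‖ ≤ 1) (hz1 : z ≠ 1) (hα : 0 < α) {s : ℂ} (hs : 1 < s.re) :
    lerchAbel z α s = ∑' m : ℕ, z ^ m * ((m : ℂ) + α) ^ (-s) := by
  have hsum : Summable fun m : ℕ ↦ z ^ m * ((m : ℂ) + α) ^ (-s) := by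
    refine (summable_natCast_add_rpow_neg hα hs).of_norm_bounded fun m ↦ ?_
    rw [norm_mul, norm_pow, norm_natCast_add_cpow hα, neg_re]
    exact mul_le_of_le_one_left (by positivity) (pow_le_one₀ (norm_nonneg z) hz)
  exact tendsto_nhds_unique (tendsto_sum_range_pow_mul_lerchAbel hz hz1 hα (by linarith))
    hsum.hasSum.tendsto_sum_nat

theorem differentiableOn_lerchAbel (hz : ‖z‖ ≤ 1) (hz1 : z ≠ 1) (hα : 0 < α) :
    DifferentiableOn ℂ (lerchAbel z α) {s | 0 < s.re} := by
  intro s₀ (hs₀ : 0 < s₀.re)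
  obtain ⟨c, hc, hcs₀⟩ : ∃ c, 0 < c ∧ c < s₀.re := ⟨s₀.re / 2, by linarith, by linarith⟩
  obtain ⟨R, hR⟩ := exists_gt ‖s₀‖
  have hR0 : 0 < R := (norm_nonneg s₀).trans_lt hR
  set U := {w : ℂ | c < w.re} ∩ Metric.ball 0 R
  have hU : IsOpen U := (isOpen_lt continuous_const continuous_re).inter Metric.isOpen_ball
  suffices DifferentiableOn ℂ (lerchAbel z α) U from
    (this.differentiableAt (hU.mem_nhds ⟨hcs₀, mem_ball_zero_iff.2 hR⟩)).differentiableWithinAt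
  refine differentiableOn_tsum_of_summable_norm (u := fun m : ℕ ↦ 2 / ‖z - 1‖ * R *
      (((m : ℝ) + α) ^ (-(R + 1)) + ((m : ℝ) + α) ^ (-(c + 1)))) ?_ (fun m ↦ ?_) hU ?_
  · exact ((summable_natCast_add_rpow_neg hα (by linarith)).add
      (summable_natCast_add_rpow_neg hα (by linarith))).mul_left _
  · have hne : ∀ n : ℕ, ((n : ℂ) + α) ≠ 0 := fun n ↦ by
      rw [natCast_add_ofReal_eq_ofReal, ofReal_ne_zero]; positivity
    exact (((differentiable_id.neg.const_cpow (Or.inl (hne m))).sub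
      (differentiable_id.neg.const_cpow (Or.inl (hne (m + 1))))).const_mul _).differentiableOn
  · rintro m w ⟨hwc, hwR⟩
    have hwR : ‖w‖ < R := mem_ball_zero_iff.1 hwR
    have hwre : w.re < R := (re_le_norm w).trans_lt hwR
    change c < w.re at hwc
    rw [norm_mul, mul_assoc]
    refine mul_le_mul (norm_geom_sum_le_two_div hz hz1 _)
      ((norm_natCast_add_cpow_neg_sub_le hα (by linarith) m).trans ?_) (norm_nonneg _)
      (by positivity)
    exact mul_le_mul hwR.le (rpow_le_rpow_add_rpow (by positivity) (by linarith) (by linarith))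
      (by positivity) (by positivity)

theorem eqOn_lerchAbel (hz : ‖z‖ ≤ 1) (hz1 : z ≠ 1) (hα : 0 < α) {f : ℂ → ℂ}
    (hf : DifferentiableOn ℂ f {s | 0 < s.re})
    (hf_eq : ∀ s : ℂ, 1 < s.re → f s = ∑' m : ℕ, z ^ m * ((m : ℂ) + α) ^ (-s)) :
    Set.EqOn f (lerchAbel z α) {s | 0 < s.re} := by
  have hU : IsOpen {s : ℂ | 0 < s.re} := isOpen_lt continuous_const continuous_re
  refine (hf.analyticOnNhd hU).eqOn_of_preconnected_of_eventuallyEq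
    ((differentiableOn_lerchAbel hz hz1 hα).analyticOnNhd hU)
    (convex_halfSpace_re_gt 0).isPreconnected (z₀ := 2) (by simp) ?_
  filter_upwards [(isOpen_lt continuous_const continuous_re).mem_nhds
    (by norm_num : (1 : ℝ) < (2 : ℂ).re)] with s hs
  rw [hf_eq s hs, lerchAbel_eq_tsum hz hz1 hα hs]

end Lerch

section Parseval

variable {T : ℝ} [Fact (0 < T)]

theorem coeFn_sum_smul_fourierLp {ι : Type*} {p : ENNReal} [Fact (1 ≤ p)] (s : Finset ι)
    (b : ι → ℂ) (n : ι → ℤ) :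
    ⇑(∑ i ∈ s, b i • fourierLp (T := T) p (n i)) =ᵐ[haarAddCircle]
      fun x ↦ ∑ i ∈ s, b i * fourier (n i) x := by
  have h : ∑ i ∈ s, b i • fourierLp (T := T) p (n i) =
      ContinuousMap.toLp p haarAddCircle ℂ (∑ i ∈ s, b i • fourier (n i)) := by
    simp [fourierLp, map_sum, map_smul]
  filter_upwards [h ▸ ContinuousMap.coeFn_toLp (p := p) haarAddCircle (𝕜 := ℂ)
    (∑ i ∈ s, b i • fourier (n i))] with x hx
  rw [hx, ContinuousMap.coe_sum, Finset.sum_apply]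
  rfl

theorem exists_hasSum_fourierLp_natCast {c : ℕ → ℂ} (hc : Summable fun m ↦ ‖c m‖ ^ 2) :
    ∃ F : Lp ℂ 2 (haarAddCircle (T := T)),
      HasSum (fun m : ℕ ↦ c m • fourierLp 2 (m : ℤ)) F ∧
        ∫ x, ‖F x‖ ^ 2 ∂haarAddCircle = ∑' m, ‖c m‖ ^ 2 := by
  set C : ℤ → ℂ := Function.extend ((↑) : ℕ → ℤ) c 0 with hC_def
  have hinj : Function.Injective ((↑) : ℕ → ℤ) := Nat.cast_injective
  have hnormC (g : ℂ → ℝ) (hg : g 0 = 0) :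
      (fun i ↦ g (C i)) = Function.extend (↑) (g ∘ c) (0 : ℤ → ℝ) := by
    ext i
    simp only [C, Function.apply_extend g]
    congr 1
    ext
    simp [hg]
  have hC : Memℓp C 2 := by
    refine (memℓp_gen_iff (by norm_num)).2 ?_
    rw [hnormC (fun x ↦ ‖x‖ ^ (2 : ENNReal).toReal) (by simp), summable_extend_zero hinj]
    simpa [Function.comp_def] using hc
  set F := (fourierBasis (T := T)).repr.symm ⟨C, hC⟩
  have hcoeff : fourierCoeff F = C := by
    ext i; rw [← fourierBasis_repr, LinearIsometryEquiv.apply_symm_apply]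
  refine ⟨F, ?_, ?_⟩
  · have h := hasSum_fourier_series_L2 F
    rw [hcoeff] at h
    have hC0 (i : ℤ) (hi : i ∉ Set.range ((↑) : ℕ → ℤ)) : C i • fourierLp (T := T) 2 i = 0 := by
      rw [hC_def, Function.extend_apply' _ _ _ hi, Pi.zero_apply, zero_smul]
    simpa [Function.comp_def, C, hinj.extend_apply] using (hinj.hasSum_iff hC0).2 h
  · rw [← tsum_sq_fourierCoeff, hcoeff, hnormC (fun x ↦ ‖x‖ ^ 2) (by simp), tsum_extend_zero hinj]
    rfl

theorem exists_ae_tendsto_sum_fourier_of_hasSum {c : ℕ → ℂ}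
    {F : Lp ℂ 2 (haarAddCircle (T := T))}
    (hF : HasSum (fun m : ℕ ↦ c m • fourierLp 2 (m : ℤ)) F) :
    ∃ ns : ℕ → ℕ, StrictMono ns ∧ ∀ᵐ x ∂haarAddCircle,
      Tendsto (fun k ↦ ∑ m ∈ range (ns k), c m * fourier (m : ℤ) x) atTop (𝓝 (F x)) := by
  obtain ⟨ns, hns, hae⟩ :=
    (tendstoInMeasure_of_tendsto_Lp hF.tendsto_sum_nat).exists_seq_tendsto_ae
  refine ⟨ns, hns, ?_⟩
  filter_upwards [hae, ae_all_iff.2 fun N ↦ coeFn_sum_smul_fourierLp (p := 2) (range N) c (↑)]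
    with x hx hpartial
  exact hx.congr fun k ↦ hpartial (ns k)

theorem intervalIntegral_norm_sq_eq_tsum_of_tendsto {c : ℕ → ℂ}
    (hc : Summable fun m ↦ ‖c m‖ ^ 2) {f : ℝ → ℂ}
    (hf : ∀ᵐ lam, lam ∈ Set.Ioo (0 : ℝ) 1 →
      Tendsto (fun N ↦ ∑ m ∈ range N, exp (2 * π * I * lam * m) * c m) atTop (𝓝 (f lam))) :
    ∫ lam in (0 : ℝ)..1, ‖f lam‖ ^ 2 = ∑' m, ‖c m‖ ^ 2 := by
  obtain ⟨F, hF, hF2⟩ := exists_hasSum_fourierLp_natCast (T := 1) hc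
  obtain ⟨ns, hns, hae⟩ := exists_ae_tendsto_sum_fourier_of_hasSum hF
  have hvol : (volume : Measure UnitAddCircle) = haarAddCircle := by
    simp [volume_eq_smul_haarAddCircle]
  have hae_vol : ∀ᵐ x ∂(volume : Measure UnitAddCircle),
      Tendsto (fun k ↦ ∑ m ∈ range (ns k), c m * fourier (m : ℤ) x) atTop (𝓝 (F x)) := by
    rwa [hvol]
  have hae_Ioc : ∀ᵐ lam : ℝ ∂volume.restrict (Set.Ioc (0 : ℝ) 1), Tendsto
      (fun k ↦ ∑ m ∈ range (ns k), c m * fourier (m : ℤ) (lam : UnitAddCircle)) atTop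
      (𝓝 (F (lam : UnitAddCircle))) := by
    simpa using (UnitAddCircle.measurePreserving_mk 0).quasiMeasurePreserving.ae hae_vol
  have hIoo : ∀ᵐ lam ∂volume.restrict (Set.Ioc (0 : ℝ) 1), lam ∈ Set.Ioo (0 : ℝ) 1 :=
    ae_restrict_of_ae_eq_of_ae_restrict Ioo_ae_eq_Ioc (ae_restrict_mem measurableSet_Ioo)
  have hfF : f =ᵐ[volume.restrict (Set.Ioc (0 : ℝ) 1)] fun lam ↦ F (lam : UnitAddCircle) := by
    filter_upwards [hae_Ioc, ae_restrict_of_ae hf, hIoo] with lam hF_lim hf_lim hlam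
    refine tendsto_nhds_unique (((hf_lim hlam).comp hns.tendsto_atTop).congr fun k ↦ ?_) hF_lim
    refine sum_congr rfl fun m _ ↦ ?_
    rw [fourier_coe_apply]
    push_cast
    ring_nf
  calc ∫ lam in (0 : ℝ)..1, ‖f lam‖ ^ 2
        = ∫ lam in Set.Ioc (0 : ℝ) 1, ‖F (lam : UnitAddCircle)‖ ^ 2 := by
        rw [intervalIntegral.integral_of_le zero_le_one]
        exact integral_congr_ae (hfF.fun_comp fun z ↦ ‖z‖ ^ 2)
    _ = ∫ x, ‖F x‖ ^ 2 := by simpa using UnitAddCircle.integral_preimage 0 fun x ↦ ‖F x‖ ^ 2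
    _ = ∑' m, ‖c m‖ ^ 2 := by rw [hvol, hF2]

end Parseval

theorem exp_two_pi_I_mul_ne_one {x : ℝ} (h0 : 0 < x) (h1 : x < 1) :
    exp (2 * π * I * x) ≠ 1 := by
  rw [Ne, Complex.exp_eq_one_iff]
  rintro ⟨n, hn⟩
  have hx : x = n := by
    have h2πI : (2 * π * I : ℂ) ≠ 0 := by simp [pi_ne_zero]
    exact_mod_cast mul_left_cancel₀ h2πI (hn.trans (mul_comm _ _))
  have : (0 : ℤ) < n ∧ n < 1 := ⟨by exact_mod_cast hx ▸ h0, by exact_mod_cast hx ▸ h1⟩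
  omega

theorem norm_exp_two_pi_I_mul (x : ℝ) : ‖exp (2 * π * I * x)‖ = 1 := by
  rw [show (2 * π * I * x : ℂ) = ((2 * π * x : ℝ) : ℂ) * I by push_cast; ring,
    norm_exp_ofReal_mul_I]

theorem lerch_parseval_in_lambda_general (φ : ℝ → ℝ → ℂ → ℂ)
    (hser : ∀ (lam α : ℝ) (s : ℂ), 0 < α → 1 < s.re →
      φ lam α s = ∑' m : ℕ, Complex.exp (2 * π * I * lam * m) * ((m : ℂ) + α) ^ (-s))
    (hanal : ∀ (lam α : ℝ), 0 < lam → lam < 1 → 0 < α → Differentiable ℂ (φ lam α))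
    (s : ℂ) (hs : 1/2 < s.re) (α : ℝ) (h0 : 0 < α) :
    ∫ lam in (0:ℝ)..1, ‖φ lam α s‖ ^ 2 = ∑' m : ℕ, ((m : ℝ) + α) ^ (-(2 * s.re)) := by
  have hnorm (m : ℕ) : ‖((m : ℂ) + α) ^ (-s)‖ ^ 2 = ((m : ℝ) + α) ^ (-(2 * s.re)) := by
    rw [norm_natCast_add_cpow h0, neg_re, ← Real.rpow_natCast, ← Real.rpow_mul (by positivity)]
    ring_nf
  simp_rw [← hnorm]
  refine intervalIntegral_norm_sq_eq_tsum_of_tendsto ?_ (ae_of_all _ fun lam hlam ↦ ?_)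
  · simpa [hnorm] using summable_natCast_add_rpow_neg h0 (by linarith : 1 < 2 * s.re)
  set z := exp (2 * π * I * lam)
  have hz : ‖z‖ ≤ 1 := (norm_exp_two_pi_I_mul lam).le
  have hz1 : z ≠ 1 := exp_two_pi_I_mul_ne_one hlam.1 hlam.2
  have hpow (m : ℕ) : exp (2 * π * I * lam * m) = z ^ m := by rw [← Complex.exp_nat_mul]; ring_nf
  have hφ := eqOn_lerchAbel hz hz1 h0 (hanal lam α hlam.1 hlam.2 h0).differentiableOn
    (fun w hw ↦ by simp_rw [hser lam α w h0 hw, hpow]) (show 0 < s.re by linarith)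
  simp_rw [hpow, hφ]
  exact tendsto_sum_range_pow_mul_lerchAbel hz hz1 h0 (by linarith)

/-- Parseval's identity in `λ` for the Lerch zeta function `φ(λ, α, s)`, characterized as the
unique function agreeing with the Dirichlet series `∑ e^{2πiλm}(m+α)^{-s}` for `1 < Re s`
and entire in `s` for `0 < λ < 1`. -/
theorem lerch_parseval_in_lambda (φ : ℝ → ℝ → ℂ → ℂ)
    (hser : ∀ (lam α : ℝ) (s : ℂ), 0 < α → 1 < s.re →
      φ lam α s = ∑' m : ℕ, Complex.exp (2 * π * I * lam * m) * ((m : ℂ) + α) ^ (-s))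
    (hanal : ∀ (lam α : ℝ), 0 < lam → lam < 1 → 0 < α → Differentiable ℂ (φ lam α))
    (s : ℂ) (hs : 1/2 < s.re) (α : ℝ) (h0 : 0 < α) (h1 : α ≤ 1) :
    ∫ lam in (0:ℝ)..1, ‖φ lam α s‖ ^ 2 = ∑' m : ℕ, ((m : ℝ) + α) ^ (-(2 * s.re)) :=
  lerch_parseval_in_lambda_general φ hser hanal s hs α h0
end
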